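/- Let A = k[z](σ, a) be a classical generalized Weyl algebra with σ(z) = z - 1, and let φ be the k-algebra automorphism determined by φ(x) = μ⁻¹x, φ(y) = μy, φ(z) = z, where μ ∈ k^× has finite order ℓ. Then the fixed ring A^⟨φ⟩ is generated by z, x^ℓ, y^ℓ, and is isomorphic to the generalized Weyl algebra k[z](σ^ℓ, â) where â = ∏_{j=0}^{ℓ-1} a(z + j). -/

import Mathlib

/-!
Over `k`, the algebra `A = R(σ, a)` is spanned by the monomials `x^n r` and `y^n r` (`r ∈ R`),
and `φ` scales them by `μ⁻ⁿ` and `μⁿ` respectively. Since eigenvectors for distinct eigenvalues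
are independent, a `φ`-fixed element lies in the span of the monomials whose degree is divisible
by `ℓ`, which is the image of the map `R(σ^ℓ, â) → A`, `x ↦ x^ℓ`, `y ↦ y^ℓ`. That map is
injective because the monomials are even independent over `R`: `A` acts on `ℤ →₀ R` with `x`
raising and `y` lowering the index, and the image of `e₀` reads off the coefficients of a
normal form.
-/

/-- Presentation relations for the rank `n` generalized Weyl algebra `R(σ, a)`:
it is generated over `R` (whose ring structure is imposed by the first four
relation families) by `x_i = ι (inr (i, false))` and `y_i = ι (inr (i, true))`,
subject to `x_i r = σ_i(r) x_i`, `y_i r = σ_i⁻¹(r) y_i`, `y_i x_i = a_i`,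
`x_i y_i = σ_i(a_i)`, and `[x_i, x_j] = [y_i, y_j] = [x_i, y_j] = 0` for `i ≠ j`. -/
inductive GWARel (k R : Type*) [CommRing k] [Ring R] [Algebra k R]
    (n : ℕ) (σ : Fin n → R ≃ₐ[k] R) (a : Fin n → R) :
    FreeAlgebra k (R ⊕ Fin n × Bool) → FreeAlgebra k (R ⊕ Fin n × Bool) → Prop
  | add (r s : R) : GWARel k R n σ a (FreeAlgebra.ι k (.inl (r + s)))
      (FreeAlgebra.ι k (.inl r) + FreeAlgebra.ι k (.inl s))
  | mul (r s : R) : GWARel k R n σ a (FreeAlgebra.ι k (.inl (r * s)))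
      (FreeAlgebra.ι k (.inl r) * FreeAlgebra.ι k (.inl s))
  | smul (c : k) (r : R) : GWARel k R n σ a (FreeAlgebra.ι k (.inl (c • r)))
      (c • FreeAlgebra.ι k (.inl r))
  | one : GWARel k R n σ a (FreeAlgebra.ι k (.inl 1)) 1
  | xr (i : Fin n) (r : R) : GWARel k R n σ a
      (FreeAlgebra.ι k (.inr (i, false)) * FreeAlgebra.ι k (.inl r))
      (FreeAlgebra.ι k (.inl (σ i r)) * FreeAlgebra.ι k (.inr (i, false)))
  | yr (i : Fin n) (r : R) : GWARel k R n σ a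
      (FreeAlgebra.ι k (.inr (i, true)) * FreeAlgebra.ι k (.inl r))
      (FreeAlgebra.ι k (.inl ((σ i).symm r)) * FreeAlgebra.ι k (.inr (i, true)))
  | yx (i : Fin n) : GWARel k R n σ a
      (FreeAlgebra.ι k (.inr (i, true)) * FreeAlgebra.ι k (.inr (i, false)))
      (FreeAlgebra.ι k (.inl (a i)))
  | xy (i : Fin n) : GWARel k R n σ a
      (FreeAlgebra.ι k (.inr (i, false)) * FreeAlgebra.ι k (.inr (i, true)))
      (FreeAlgebra.ι k (.inl (σ i (a i))))
  | comm (i j : Fin n) (s t : Bool) (h : i ≠ j) : GWARel k R n σ a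
      (FreeAlgebra.ι k (.inr (i, s)) * FreeAlgebra.ι k (.inr (j, t)))
      (FreeAlgebra.ι k (.inr (j, t)) * FreeAlgebra.ι k (.inr (i, s)))

/-- The rank `n` generalized Weyl algebra `R(σ, a)`, presented by generators and
relations. -/
abbrev GWA (k R : Type*) [CommRing k] [Ring R] [Algebra k R]
    (n : ℕ) (σ : Fin n → R ≃ₐ[k] R) (a : Fin n → R) : Type _ :=
  RingQuot (GWARel k R n σ a)

/-- The image of `r ∈ R` in the generalized Weyl algebra. -/
noncomputable def GWA.r (k R : Type*) [CommRing k] [Ring R] [Algebra k R]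
    {n : ℕ} (σ : Fin n → R ≃ₐ[k] R) (a : Fin n → R) (r : R) : GWA k R n σ a :=
  RingQuot.mkAlgHom k (GWARel k R n σ a) (FreeAlgebra.ι k (.inl r))

/-- The generator `x_i` of the generalized Weyl algebra. -/
noncomputable def GWA.x (k R : Type*) [CommRing k] [Ring R] [Algebra k R]
    {n : ℕ} (σ : Fin n → R ≃ₐ[k] R) (a : Fin n → R) (i : Fin n) : GWA k R n σ a :=
  RingQuot.mkAlgHom k (GWARel k R n σ a) (FreeAlgebra.ι k (.inr (i, false)))

/-- The generator `y_i` of the generalized Weyl algebra. -/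
noncomputable def GWA.y (k R : Type*) [CommRing k] [Ring R] [Algebra k R]
    {n : ℕ} (σ : Fin n → R ≃ₐ[k] R) (a : Fin n → R) (i : Fin n) : GWA k R n σ a :=
  RingQuot.mkAlgHom k (GWARel k R n σ a) (FreeAlgebra.ι k (.inr (i, true)))

/-- The automorphism `σ` of `k[z]` with `σ(z) = z - 1`. -/
noncomputable def shiftDown (k : Type*) [CommRing k] : Polynomial k ≃ₐ[k] Polynomial k :=
  AlgEquiv.ofAlgHom (Polynomial.aeval (Polynomial.X - 1)) (Polynomial.aeval (Polynomial.X + 1))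
    (by ext : 1; simp) (by ext : 1; simp)

open Function Set Submodule

theorem AlgEquiv.pow_symm {k A : Type*} [CommSemiring k] [Semiring A] [Algebra k A]
    (τ : A ≃ₐ[k] A) (m : ℕ) : (τ ^ m).symm = τ.symm ^ m :=
  (inv_pow τ m).symm

theorem Module.End.eigenspace_le_span_of_eigenvectors {R M ι : Type*} [CommRing R] [IsDomain R]
    [AddCommGroup M] [Module R M] [IsTorsionFree R M] (f : Module.End R M) (g : ι → M)
    (ζ : ι → R) (hg : span R (range g) = ⊤) (hζ : ∀ i, f (g i) = ζ i • g i) (c : R) :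
    f.eigenspace c ≤ span R (g '' {i | ζ i = c}) := by
  set V : R → Submodule R M := fun d => span R (g '' {i | ζ i = d})
  have hV : ∀ d, V d ≤ f.eigenspace d := fun d =>
    span_le.2 fun _ ⟨i, hi, hgi⟩ => hgi ▸ Module.End.mem_eigenspace_iff.2 (hi ▸ hζ i)
  have hgV : span R (range g) ≤ ⨆ d, V d :=
    span_le.2 <| range_subset_iff.2 fun i => mem_iSup_of_mem (ζ i) (subset_span ⟨i, rfl, rfl⟩)
  intro u hu
  have hu' : u ∈ V c ⊔ ⨆ (d) (_ : d ≠ c), V d := by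
    rw [← iSup_split_single V c]
    exact hgV (hg ▸ mem_top)
  obtain ⟨v, hv, w, hw, rfl⟩ := mem_sup.1 hu'
  have hw_zero : w = 0 := disjoint_def.1 (f.eigenspaces_iSupIndep c) w
    (by simpa using sub_mem hu (hV c hv)) (iSup₂_mono (fun d _ => hV d) hw)
  simpa [hw_zero] using hv

namespace GWA

section Relations

variable {k R : Type*} [CommRing k] [Ring R] [Algebra k R] {n : ℕ} (σ : Fin n → R ≃ₐ[k] R)
  (a : Fin n → R)

noncomputable def rAlgHom : R →ₐ[k] GWA k R n σ a where
  toFun := GWA.r k R σ a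
  map_one' := (RingQuot.mkAlgHom_rel k GWARel.one).trans (map_one _)
  map_mul' p q := (RingQuot.mkAlgHom_rel k (GWARel.mul p q)).trans (map_mul _ _ _)
  map_zero' := by
    have h := (RingQuot.mkAlgHom_rel k (GWARel.add (σ := σ) (a := a) 0 0)).trans (map_add _ _ _)
    rw [add_zero] at h
    exact left_eq_add.1 h
  map_add' p q := (RingQuot.mkAlgHom_rel k (GWARel.add p q)).trans (map_add _ _ _)
  commutes' c := by
    rw [Algebra.algebraMap_eq_smul_one, Algebra.algebraMap_eq_smul_one]
    exact (RingQuot.mkAlgHom_rel k (GWARel.smul c 1)).trans <| by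
      rw [map_smul, RingQuot.mkAlgHom_rel k GWARel.one, map_one]

theorem rAlgHom_apply (p : R) : rAlgHom σ a p = GWA.r k R σ a p := rfl

theorem x_mul_r (i : Fin n) (p : R) :
    GWA.x k R σ a i * rAlgHom σ a p = rAlgHom σ a (σ i p) * GWA.x k R σ a i := by
  have h := RingQuot.mkAlgHom_rel k (GWARel.xr (σ := σ) (a := a) i p)
  rwa [map_mul, map_mul, ← GWA.r, ← GWA.r, ← rAlgHom_apply, ← rAlgHom_apply] at h

theorem y_mul_r (i : Fin n) (p : R) :
    GWA.y k R σ a i * rAlgHom σ a p = rAlgHom σ a ((σ i).symm p) * GWA.y k R σ a i := by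
  have h := RingQuot.mkAlgHom_rel k (GWARel.yr (σ := σ) (a := a) i p)
  rwa [map_mul, map_mul, ← GWA.r, ← GWA.r, ← rAlgHom_apply, ← rAlgHom_apply] at h

theorem y_mul_x (i : Fin n) : GWA.y k R σ a i * GWA.x k R σ a i = rAlgHom σ a (a i) := by
  have h := RingQuot.mkAlgHom_rel k (GWARel.yx (σ := σ) (a := a) i)
  rwa [map_mul, ← GWA.r, ← rAlgHom_apply] at h

theorem x_mul_y (i : Fin n) :
    GWA.x k R σ a i * GWA.y k R σ a i = rAlgHom σ a (σ i (a i)) := by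
  have h := RingQuot.mkAlgHom_rel k (GWARel.xy (σ := σ) (a := a) i)
  rwa [map_mul, ← GWA.r, ← rAlgHom_apply] at h

end Relations

section RankOne

variable {k R : Type*} [CommRing k] [CommRing R] [Algebra k R] (σ : R ≃ₐ[k] R) (a : R)

local notation "𝐫" => rAlgHom ![σ] ![a]
local notation "𝐱" => GWA.x k R ![σ] ![a] 0
local notation "𝐲" => GWA.y k R ![σ] ![a] 0

section Lift

variable {B : Type*} [Semiring B] [Algebra k B] (f : R →ₐ[k] B) (X Y : B)
    (hX : ∀ p, X * f p = f (σ p) * X) (hY : ∀ p, Y * f p = f (σ.symm p) * Y)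
    (hYX : Y * X = f a) (hXY : X * Y = f (σ a))

noncomputable def lift : GWA k R 1 ![σ] ![a] →ₐ[k] B :=
  RingQuot.liftAlgHom k ⟨FreeAlgebra.lift k (Sum.elim f fun i => cond i.2 Y X), by
    intro u v h
    induction h with
    | comm i j _ _ hij => exact absurd (Subsingleton.elim i j) hij
    | _ => simp_all [Fin.fin_one_eq_zero]⟩

@[simp]
theorem lift_r (p : R) : lift σ a f X Y hX hY hYX hXY (𝐫 p) = f p := by
  simp [lift, rAlgHom_apply, GWA.r]

@[simp]
theorem lift_x : lift σ a f X Y hX hY hYX hXY 𝐱 = X := by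
  simp [lift, GWA.x]

@[simp]
theorem lift_y : lift σ a f X Y hX hY hYX hXY 𝐲 = Y := by
  simp [lift, GWA.y]

end Lift

theorem hom_ext {B : Type*} [Semiring B] [Algebra k B] {g h : GWA k R 1 ![σ] ![a] →ₐ[k] B}
    (hr : ∀ p, g (𝐫 p) = h (𝐫 p)) (hx : g 𝐱 = h 𝐱) (hy : g 𝐲 = h 𝐲) : g = h := by
  refine RingQuot.ringQuot_ext' k _ _ <| FreeAlgebra.hom_ext <| funext ?_
  rintro (p | ⟨i, _ | _⟩)
  · simpa [rAlgHom_apply, GWA.r] using hr p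
  · exact Fin.fin_one_eq_zero i ▸ hx
  · exact Fin.fin_one_eq_zero i ▸ hy

theorem pow_mul_r {X : GWA k R 1 ![σ] ![a]} {τ : R ≃ₐ[k] R}
    (h : ∀ p, X * 𝐫 p = 𝐫 (τ p) * X) (m : ℕ) (p : R) : X ^ m * 𝐫 p = 𝐫 ((τ ^ m) p) * X ^ m := by
  induction m generalizing p with
  | zero => simp
  | succ m ih => rw [pow_succ, mul_assoc, h, ← mul_assoc, ih, mul_assoc, ← pow_succ,
      pow_succ τ, AlgEquiv.mul_apply]

theorem x_pow_mul_r (m : ℕ) (p : R) : 𝐱 ^ m * 𝐫 p = 𝐫 ((σ ^ m) p) * 𝐱 ^ m :=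
  pow_mul_r σ a (x_mul_r _ _ 0) m p

theorem y_pow_mul_r (m : ℕ) (p : R) : 𝐲 ^ m * 𝐫 p = 𝐫 ((σ.symm ^ m) p) * 𝐲 ^ m :=
  pow_mul_r σ a (y_mul_r _ _ 0) m p

theorem r_mul_x_pow (m : ℕ) (p : R) : 𝐫 p * 𝐱 ^ m = 𝐱 ^ m * 𝐫 ((σ.symm ^ m) p) := by
  rw [x_pow_mul_r, ← AlgEquiv.pow_symm, AlgEquiv.apply_symm_apply]

theorem r_mul_y_pow (m : ℕ) (p : R) : 𝐫 p * 𝐲 ^ m = 𝐲 ^ m * 𝐫 ((σ ^ m) p) := by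
  rw [y_pow_mul_r, ← AlgEquiv.pow_symm, AlgEquiv.symm_apply_apply]

theorem y_pow_mul_x_pow (m : ℕ) : 𝐲 ^ m * 𝐱 ^ m = 𝐫 (∏ j ∈ Finset.range m, (σ.symm ^ j) a) := by
  induction m with
  | zero => simp
  | succ m ih =>
    rw [pow_succ 𝐲, pow_succ' 𝐱, mul_assoc, ← mul_assoc 𝐲, y_mul_x, Matrix.cons_val_zero,
      r_mul_x_pow, ← mul_assoc, ih, ← map_mul, Finset.prod_range_succ]

theorem x_pow_mul_y_pow (m : ℕ) :
    𝐱 ^ m * 𝐲 ^ m = 𝐫 ((σ ^ m) (∏ j ∈ Finset.range m, (σ.symm ^ j) a)) := by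
  induction m with
  | zero => simp
  | succ m ih =>
    rw [pow_succ 𝐱, pow_succ' 𝐲, mul_assoc, ← mul_assoc 𝐱, x_mul_y]
    simp only [Matrix.cons_val_zero]
    rw [r_mul_y_pow, ← mul_assoc, ih, ← map_mul, Finset.prod_range_succ', pow_succ σ,
      AlgEquiv.mul_apply, map_mul σ, map_prod σ, map_mul (σ ^ m)]
    simp only [pow_succ' σ.symm, AlgEquiv.mul_apply, AlgEquiv.apply_symm_apply, pow_zero,
      AlgEquiv.one_apply]

noncomputable def monomial : ℤ → GWA k R 1 ![σ] ![a]
  | .ofNat m => 𝐱 ^ m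
  | .negSucc m => 𝐲 ^ (m + 1)

@[simp]
theorem monomial_zero : monomial σ a 0 = 1 := pow_zero 𝐱

@[simp]
theorem monomial_natCast (m : ℕ) : monomial σ a m = 𝐱 ^ m := rfl

@[simp]
theorem monomial_neg_natCast (m : ℕ) : monomial σ a (-m) = 𝐲 ^ m := by
  cases m
  · exact (monomial_zero σ a).trans (pow_zero 𝐲).symm
  · rfl

theorem adjoin_eq_top : Algebra.adjoin k (range 𝐫 ∪ {𝐱, 𝐲}) = ⊤ := by
  have hgen : range 𝐫 ∪ {𝐱, 𝐲} =
      RingQuot.mkAlgHom k (GWARel k R 1 ![σ] ![a]) '' range (FreeAlgebra.ι k) := by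
    ext u
    simp only [mem_union, mem_range, mem_insert_iff, mem_singleton_iff, ← range_comp]
    constructor
    · rintro (⟨p, rfl⟩ | rfl | rfl)
      exacts [⟨.inl p, rfl⟩, ⟨.inr (0, false), rfl⟩, ⟨.inr (0, true), rfl⟩]
    · rintro ⟨p | ⟨i, _ | _⟩, rfl⟩
      exacts [.inl ⟨p, rfl⟩, .inr (.inl (by rw [Fin.fin_one_eq_zero i]; rfl)),
        .inr (.inr (by rw [Fin.fin_one_eq_zero i]; rfl))]
  rw [hgen, Algebra.adjoin_image, FreeAlgebra.adjoin_range_ι, Algebra.map_top,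
    AlgHom.range_eq_top]
  exact RingQuot.mkAlgHom_surjective k _

theorem exists_gen_mul_monomial_mul_r {g : GWA k R 1 ![σ] ![a]} (hg : g ∈ range 𝐫 ∪ {𝐱, 𝐲})
    (n : ℤ) (q : R) : ∃ n' q', g * (monomial σ a n * 𝐫 q) = monomial σ a n' * 𝐫 q' := by
  obtain ⟨m, rfl | rfl⟩ := Int.eq_nat_or_neg n
  all_goals rcases hg with ⟨p, rfl⟩ | rfl | rfl
  · refine ⟨m, (σ.symm ^ m) p * q, ?_⟩
    rw [monomial_natCast, ← mul_assoc, r_mul_x_pow, mul_assoc, ← map_mul]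
  · refine ⟨(m + 1 : ℕ), q, ?_⟩
    rw [monomial_natCast, monomial_natCast, ← mul_assoc, ← pow_succ']
  · cases m with
    | zero =>
      refine ⟨-(1 : ℕ), q, ?_⟩
      rw [monomial_natCast, monomial_neg_natCast, pow_zero, one_mul, pow_one]
    | succ m =>
      refine ⟨m, (σ.symm ^ m) a * q, ?_⟩
      rw [monomial_natCast, monomial_natCast, pow_succ', ← mul_assoc, ← mul_assoc, y_mul_x,
        Matrix.cons_val_zero, r_mul_x_pow, mul_assoc, ← map_mul]
  · refine ⟨-m, (σ ^ m) p * q, ?_⟩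
    rw [monomial_neg_natCast, ← mul_assoc, r_mul_y_pow, mul_assoc, ← map_mul]
  · cases m with
    | zero =>
      refine ⟨(1 : ℕ), q, ?_⟩
      rw [monomial_neg_natCast, monomial_natCast, pow_zero, one_mul, pow_one]
    | succ m =>
      refine ⟨-m, (σ ^ m) (σ a) * q, ?_⟩
      rw [monomial_neg_natCast, monomial_neg_natCast, pow_succ', ← mul_assoc, ← mul_assoc,
        x_mul_y]
      simp only [Matrix.cons_val_zero]
      rw [r_mul_y_pow, mul_assoc, ← map_mul]
  · refine ⟨-(m + 1 : ℕ), q, ?_⟩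
    rw [monomial_neg_natCast, monomial_neg_natCast, ← mul_assoc, ← pow_succ']

theorem span_monomial_mul_r :
    span k (range fun i : ℤ × R => monomial σ a i.1 * 𝐫 i.2) = ⊤ := by
  set M := span k (range fun i : ℤ × R => monomial σ a i.1 * 𝐫 i.2)
  have hM : ∀ u, ∀ v ∈ M, u * v ∈ M := by
    intro u
    have hu : u ∈ Algebra.adjoin k (range 𝐫 ∪ {𝐱, 𝐲}) := adjoin_eq_top σ a ▸ Algebra.mem_top
    induction hu using Algebra.adjoin_induction with
    | mem g hg =>
      intro v hv
      induction hv using span_induction with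
      | mem _ hv =>
        obtain ⟨⟨n, q⟩, rfl⟩ := hv
        obtain ⟨n', q', h⟩ := exists_gen_mul_monomial_mul_r σ a hg n q
        exact h ▸ subset_span ⟨(n', q'), rfl⟩
      | zero => simp
      | add v w _ _ hv hw => rw [mul_add]; exact add_mem hv hw
      | smul c v _ hv => rw [mul_smul_comm]; exact smul_mem _ c hv
    | algebraMap c => intro v hv; rw [← Algebra.smul_def]; exact smul_mem _ c hv
    | add u w _ _ hu hw => intro v hv; rw [add_mul]; exact add_mem (hu v hv) (hw v hv)
    | mul u w _ _ hu hw => intro v hv; rw [mul_assoc]; exact hu _ (hw v hv)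
  refine eq_top_iff.2 fun u _ => mul_one u ▸ hM u 1 (subset_span ⟨(0, 1), ?_⟩)
  simp

noncomputable def normalForm : (ℤ →₀ R) →ₗ[k] GWA k R 1 ![σ] ![a] :=
  Finsupp.lsum k fun n => LinearMap.mulLeft k (monomial σ a n) ∘ₗ (𝐫).toLinearMap

theorem normalForm_single (n : ℤ) (p : R) :
    normalForm σ a (Finsupp.single n p) = monomial σ a n * 𝐫 p := by
  simp [normalForm]

theorem normalForm_surjective : Surjective (normalForm σ a) := by
  refine LinearMap.range_eq_top.1 (eq_top_iff.2 ((span_monomial_mul_r σ a).ge.trans ?_))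
  exact span_le.2 <| range_subset_iff.2 fun i =>
    ⟨Finsupp.single i.1 i.2, normalForm_single σ a _ _⟩

noncomputable def raise (b : R) : Module.End k (ℤ →₀ R) :=
  Finsupp.lsum k fun i => Finsupp.lsingle (i + 1) ∘ₗ σ.toLinearMap ∘ₗ LinearMap.mulRight k b

noncomputable def lower (c : R) : Module.End k (ℤ →₀ R) :=
  Finsupp.lsum k fun i => Finsupp.lsingle (i - 1) ∘ₗ LinearMap.mulRight k c ∘ₗ σ.symm.toLinearMap

omit a in
@[simp]
theorem raise_single (b : R) (i : ℤ) (d : R) :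
    raise σ b (Finsupp.single i d) = Finsupp.single (i + 1) (σ (d * b)) := by
  simp [raise]

omit a in
@[simp]
theorem lower_single (c : R) (i : ℤ) (d : R) :
    lower σ c (Finsupp.single i d) = Finsupp.single (i - 1) (σ.symm d * c) := by
  simp [lower]

noncomputable def ladderRep (b c : R) (h : b * c = a) :
    GWA k R 1 ![σ] ![a] →ₐ[k] Module.End k (ℤ →₀ R) :=
  lift σ a (Algebra.lsmul k k (ℤ →₀ R)) (raise σ b) (lower σ c)
    (fun p => Finsupp.lhom_ext fun i d => by simp [mul_assoc, -Finsupp.single_mul])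
    (fun p => Finsupp.lhom_ext fun i d => by simp [mul_assoc, -Finsupp.single_mul])
    (Finsupp.lhom_ext fun i d => by simp [← h, mul_comm, mul_left_comm, -Finsupp.single_mul])
    (Finsupp.lhom_ext fun i d => by simp [← h, mul_comm, mul_left_comm, -Finsupp.single_mul])

omit a in
theorem exists_raise_pow_single (b : R) (m : ℕ) (i : ℤ) (d : R) :
    ∃ e, (raise σ b ^ m) (Finsupp.single i d) = Finsupp.single (i + m) e := by
  induction m generalizing i d with
  | zero => exact ⟨d, by simp⟩
  | succ m ih =>
    obtain ⟨e, he⟩ := ih (i + 1) (σ (d * b))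
    exact ⟨e, by rw [pow_succ, Module.End.mul_apply, raise_single, he]; push_cast; ring_nf⟩

omit a in
theorem exists_lower_pow_single (c : R) (m : ℕ) (i : ℤ) (d : R) :
    ∃ e, (lower σ c ^ m) (Finsupp.single i d) = Finsupp.single (i - m) e := by
  induction m generalizing i d with
  | zero => exact ⟨d, by simp⟩
  | succ m ih =>
    obtain ⟨e, he⟩ := ih (i - 1) (σ.symm d * c)
    exact ⟨e, by rw [pow_succ, Module.End.mul_apply, lower_single, he]; push_cast; ring_nf⟩

omit a in
theorem raise_one_pow_single (m : ℕ) (i : ℤ) (d : R) :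
    (raise σ 1 ^ m) (Finsupp.single i d) = Finsupp.single (i + m) ((σ ^ m) d) := by
  induction m generalizing i d with
  | zero => simp
  | succ m ih =>
    rw [pow_succ, Module.End.mul_apply, raise_single, mul_one, ih, pow_succ, AlgEquiv.mul_apply]
    push_cast; ring_nf

omit a in
theorem lower_one_pow_single (m : ℕ) (i : ℤ) (d : R) :
    (lower σ 1 ^ m) (Finsupp.single i d) = Finsupp.single (i - m) ((σ.symm ^ m) d) := by
  induction m generalizing i d with
  | zero => simp
  | succ m ih =>
    rw [pow_succ, Module.End.mul_apply, lower_single, mul_one, ih, pow_succ, AlgEquiv.mul_apply]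
    push_cast; ring_nf

variable (b c : R) (h : b * c = a)

@[simp]
theorem ladderRep_r (p : R) : ladderRep σ a b c h (𝐫 p) = Algebra.lsmul k k (ℤ →₀ R) p :=
  lift_r ..

@[simp]
theorem ladderRep_x : ladderRep σ a b c h 𝐱 = raise σ b :=
  lift_x ..

@[simp]
theorem ladderRep_y : ladderRep σ a b c h 𝐲 = lower σ c :=
  lift_y ..

theorem exists_ladderRep_monomial_mul_r (n : ℤ) (p : R) :
    ∃ e, ladderRep σ a b c h (monomial σ a n * 𝐫 p) (Finsupp.single 0 1) = Finsupp.single n e := by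
  obtain ⟨m, rfl | rfl⟩ := Int.eq_nat_or_neg n
  · simpa using exists_raise_pow_single σ b m 0 p
  · simpa using exists_lower_pow_single σ c m 0 p

theorem ladderRep_normalForm_apply (f : ℤ →₀ R) (n : ℤ) :
    ladderRep σ a b c h (normalForm σ a f) (Finsupp.single 0 1) n =
      ladderRep σ a b c h (monomial σ a n * 𝐫 (f n)) (Finsupp.single 0 1) n := by
  induction f using Finsupp.induction_linear with
  | zero => simp
  | add f g hf hg => simp [hf, hg, mul_add]
  | single j p =>
    obtain rfl | hj := eq_or_ne j n
    · simp [normalForm_single]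
    · obtain ⟨e, he⟩ := exists_ladderRep_monomial_mul_r σ a b c h j p
      rw [normalForm_single, he, Finsupp.single_eq_of_ne' hj, Finsupp.single_eq_of_ne' hj]
      simp

theorem normalForm_injective : Injective (normalForm σ a) := by
  refine (injective_iff_map_eq_zero _).2 fun f hf => Finsupp.ext fun n => ?_
  -- `ladderRep 1 a` reads off the coefficients of the `x`-monomials, `ladderRep a 1` those of
  -- the `y`-monomials.
  obtain ⟨m, rfl | rfl⟩ := Int.eq_nat_or_neg n
  · have := ladderRep_normalForm_apply σ a 1 a (one_mul a) f m
    simp only [hf, map_zero] at this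
    simpa [raise_one_pow_single, -AlgEquiv.coe_pow] using this.symm
  · have := ladderRep_normalForm_apply σ a a 1 (mul_one a) f (-m)
    simp only [hf, map_zero] at this
    simpa [lower_one_pow_single, -AlgEquiv.coe_pow] using this.symm

variable (ℓ : ℕ)

local notation "â" => ∏ j ∈ Finset.range ℓ, (σ.symm ^ j) a

noncomputable def powAlgHom : GWA k R 1 ![σ ^ ℓ] ![â] →ₐ[k] GWA k R 1 ![σ] ![a] :=
  lift (σ ^ ℓ) â 𝐫 (𝐱 ^ ℓ) (𝐲 ^ ℓ) (x_pow_mul_r σ a ℓ)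
    (fun p => by rw [AlgEquiv.pow_symm]; exact y_pow_mul_r σ a ℓ p)
    (y_pow_mul_x_pow σ a ℓ) (x_pow_mul_y_pow σ a ℓ)

@[simp]
theorem powAlgHom_r (p : R) : powAlgHom σ a ℓ (rAlgHom ![σ ^ ℓ] ![â] p) = 𝐫 p :=
  lift_r ..

@[simp]
theorem powAlgHom_x : powAlgHom σ a ℓ (GWA.x k R ![σ ^ ℓ] ![â] 0) = 𝐱 ^ ℓ :=
  lift_x ..

@[simp]
theorem powAlgHom_y : powAlgHom σ a ℓ (GWA.y k R ![σ ^ ℓ] ![â] 0) = 𝐲 ^ ℓ :=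
  lift_y ..

theorem powAlgHom_monomial (n : ℤ) :
    powAlgHom σ a ℓ (monomial (σ ^ ℓ) â n) = monomial σ a (ℓ * n) := by
  obtain ⟨m, rfl | rfl⟩ := Int.eq_nat_or_neg n
  · rw [monomial_natCast, map_pow, powAlgHom_x, ← pow_mul, ← Nat.cast_mul, monomial_natCast]
  · rw [monomial_neg_natCast, map_pow, powAlgHom_y, ← pow_mul, mul_neg, ← Nat.cast_mul,
      monomial_neg_natCast]

theorem powAlgHom_comp_normalForm :
    (powAlgHom σ a ℓ).toLinearMap ∘ₗ normalForm (σ ^ ℓ) â =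
      normalForm σ a ∘ₗ Finsupp.lmapDomain R k ((ℓ : ℤ) * ·) :=
  Finsupp.lhom_ext fun n p => by simp [normalForm_single, powAlgHom_monomial]

theorem powAlgHom_injective (hℓ : ℓ ≠ 0) : Injective (powAlgHom σ a ℓ) := by
  refine Injective.of_comp_right ?_ (normalForm_surjective (σ ^ ℓ) â)
  have h := congrArg DFunLike.coe (powAlgHom_comp_normalForm σ a ℓ)
  rw [LinearMap.coe_comp, LinearMap.coe_comp] at h
  rw [← AlgHom.coe_toLinearMap, h]
  exact (normalForm_injective σ a).comp
    (Finsupp.mapDomain_injective (mul_right_injective₀ (Nat.cast_ne_zero.2 hℓ)))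

theorem range_powAlgHom :
    (powAlgHom σ a ℓ).range = Algebra.adjoin k (range 𝐫 ∪ {𝐱 ^ ℓ, 𝐲 ^ ℓ}) := by
  rw [← Algebra.map_top, ← adjoin_eq_top, ← Algebra.adjoin_image, image_union, ← range_comp,
    image_insert_eq, image_singleton]
  simp [comp_def]

end RankOne

section FixedRing

variable {k R : Type*} [Field k] [CommRing R] [Algebra k R] (σ : R ≃ₐ[k] R) (a : R) {μ : k}

local notation "𝐫" => rAlgHom ![σ] ![a]

variable (φ : GWA k R 1 ![σ] ![a] →ₐ[k] GWA k R 1 ![σ] ![a])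
  (hr : ∀ p, φ (rAlgHom ![σ] ![a] p) = rAlgHom ![σ] ![a] p)
  (hx : φ (GWA.x k R ![σ] ![a] 0) = μ⁻¹ • GWA.x k R ![σ] ![a] 0)
  (hy : φ (GWA.y k R ![σ] ![a] 0) = μ • GWA.y k R ![σ] ![a] 0)

include hr hx hy in
theorem map_monomial_mul_r (n : ℤ) (p : R) :
    φ (monomial σ a n * 𝐫 p) = μ ^ (-n) • (monomial σ a n * 𝐫 p) := by
  obtain ⟨m, rfl | rfl⟩ := Int.eq_nat_or_neg n
  · simp [hr, hx, smul_pow]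
  · simp [hr, hy, smul_pow]

include hr hx hy in
theorem range_powAlgHom_eq_equalizer {ℓ : ℕ} (hμ : IsPrimitiveRoot μ ℓ) :
    (powAlgHom σ a ℓ).range = AlgHom.equalizer φ (AlgHom.id k _) := by
  apply le_antisymm
  · have hφ : φ.comp (powAlgHom σ a ℓ) = powAlgHom σ a ℓ := by
      refine hom_ext _ _ (fun p => ?_) ?_ ?_ <;>
        simp [hr, hx, hy, smul_pow, inv_pow, hμ.pow_eq_one]
    rintro _ ⟨u, rfl⟩
    exact AlgHom.congr_fun hφ u
  · intro u hu
    have hu₁ : u ∈ Module.End.eigenspace φ.toLinearMap 1 :=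
      Module.End.mem_eigenspace_iff.2 (by simpa using hu)
    refine (span_le.2 ?_ : _ ≤ Subalgebra.toSubmodule (powAlgHom σ a ℓ).range) <|
      Module.End.eigenspace_le_span_of_eigenvectors _ _ _ (span_monomial_mul_r σ a)
        (fun i => map_monomial_mul_r σ a φ hr hx hy i.1 i.2) 1 hu₁
    rintro _ ⟨⟨n, p⟩, hn, rfl⟩
    obtain ⟨m, rfl⟩ := dvd_neg.1 ((hμ.zpow_eq_one_iff_dvd _).1 hn)
    exact ⟨monomial (σ ^ ℓ) _ m * rAlgHom _ _ p, by simp [powAlgHom_monomial]⟩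

end FixedRing

end GWA

section ShiftDown

open Polynomial

theorem shiftDown_symm_pow_apply {k : Type*} [CommRing k] (j : ℕ) (p : k[X]) :
    ((shiftDown k).symm ^ j) p = p.comp (X + C (j : k)) := by
  induction j with
  | zero => simp
  | succ j ih =>
    rw [pow_succ', AlgEquiv.mul_apply, ih]
    show aeval (X + 1) (p.comp (X + C (j : k))) = _
    rw [← comp_eq_aeval, Polynomial.comp_assoc]
    simp [add_assoc, add_comm (1 : k[X])]

theorem Polynomial.adjoin_range_union {k A : Type*} [CommSemiring k] [Semiring A] [Algebra k A]
    (f : k[X] →ₐ[k] A) (s : Set A) :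
    Algebra.adjoin k (range f ∪ s) = Algebra.adjoin k (insert (f X) s) := by
  refine le_antisymm (Algebra.adjoin_le (union_subset (range_subset_iff.2 fun p => ?_)
    ((subset_insert _ _).trans Algebra.subset_adjoin)))
    (Algebra.adjoin_mono (insert_subset (Or.inl ⟨X, rfl⟩) subset_union_right))
  rw [← aeval_X_left_apply p, ← aeval_algHom_apply]
  exact Algebra.adjoin_mono (singleton_subset_iff.2 (mem_insert _ _))
    (aeval_mem_adjoin_singleton k _)

end ShiftDown

theorem classical_gwa_fixed_ring_general (k : Type*) [Field k]
    (a : Polynomial k) (μ : k) (ℓ : ℕ) (hℓ : 0 < ℓ) (hμ : orderOf μ = ℓ)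
    (φ : GWA k (Polynomial k) 1 ![shiftDown k] ![a] ≃ₐ[k]
      GWA k (Polynomial k) 1 ![shiftDown k] ![a])
    (hx : φ (GWA.x k (Polynomial k) ![shiftDown k] ![a] 0) =
      μ⁻¹ • GWA.x k (Polynomial k) ![shiftDown k] ![a] 0)
    (hy : φ (GWA.y k (Polynomial k) ![shiftDown k] ![a] 0) =
      μ • GWA.y k (Polynomial k) ![shiftDown k] ![a] 0)
    (hz : φ (GWA.r k (Polynomial k) ![shiftDown k] ![a] Polynomial.X) =
      GWA.r k (Polynomial k) ![shiftDown k] ![a] Polynomial.X) :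
    AlgHom.equalizer (φ : GWA k (Polynomial k) 1 ![shiftDown k] ![a] →ₐ[k] _)
        (AlgHom.id k _) =
      Algebra.adjoin k
        {GWA.r k (Polynomial k) ![shiftDown k] ![a] Polynomial.X,
         GWA.x k (Polynomial k) ![shiftDown k] ![a] 0 ^ ℓ,
         GWA.y k (Polynomial k) ![shiftDown k] ![a] 0 ^ ℓ} ∧
    Nonempty ((AlgHom.equalizer (φ : GWA k (Polynomial k) 1 ![shiftDown k] ![a] →ₐ[k] _)
        (AlgHom.id k _)) ≃ₐ[k]
      GWA k (Polynomial k) 1 ![shiftDown k ^ ℓ]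
        ![∏ j ∈ Finset.range ℓ, a.comp (Polynomial.X + Polynomial.C (j : k))]) := by
  have hr : ∀ p, φ (GWA.rAlgHom ![shiftDown k] ![a] p) = GWA.rAlgHom ![shiftDown k] ![a] p :=
    AlgHom.congr_fun <| Polynomial.algHom_ext (f := φ.toAlgHom.comp (GWA.rAlgHom _ _))
      (g := GWA.rAlgHom _ _) hz
  have hfix := GWA.range_powAlgHom_eq_equalizer (shiftDown k) a φ hr hx hy
    (hμ ▸ IsPrimitiveRoot.orderOf μ)
  rw [← Finset.prod_congr rfl fun j _ => shiftDown_symm_pow_apply j a, ← hfix]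
  refine ⟨?_, ⟨(AlgEquiv.ofInjective _ (GWA.powAlgHom_injective _ _ _ hℓ.ne')).symm⟩⟩
  rw [GWA.range_powAlgHom, Polynomial.adjoin_range_union]
  rfl

/-- Let `A = k[z](σ, a)` be a classical GWA with `σ(z) = z - 1`, and
let `φ` be the `k`-algebra automorphism with `φ(x) = μ⁻¹x`, `φ(y) = μy`, `φ(z) = z`,
where `μ ∈ k^×` has finite order `ℓ`. Then the fixed ring `A^⟨φ⟩` is generated by
`z, x^ℓ, y^ℓ` and is isomorphic to `k[z](σ^ℓ, â)` with `â = ∏_{j=0}^{ℓ-1} a(z + j)`. -/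
theorem classical_gwa_fixed_ring (k : Type*) [Field k] [CharZero k]
    (a : Polynomial k) (μ : k) (ℓ : ℕ) (hℓ : 0 < ℓ) (hμ : orderOf μ = ℓ)
    (φ : GWA k (Polynomial k) 1 ![shiftDown k] ![a] ≃ₐ[k]
      GWA k (Polynomial k) 1 ![shiftDown k] ![a])
    (hx : φ (GWA.x k (Polynomial k) ![shiftDown k] ![a] 0) =
      μ⁻¹ • GWA.x k (Polynomial k) ![shiftDown k] ![a] 0)
    (hy : φ (GWA.y k (Polynomial k) ![shiftDown k] ![a] 0) =
      μ • GWA.y k (Polynomial k) ![shiftDown k] ![a] 0)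
    (hz : φ (GWA.r k (Polynomial k) ![shiftDown k] ![a] Polynomial.X) =
      GWA.r k (Polynomial k) ![shiftDown k] ![a] Polynomial.X) :
    AlgHom.equalizer (φ : GWA k (Polynomial k) 1 ![shiftDown k] ![a] →ₐ[k] _)
        (AlgHom.id k _) =
      Algebra.adjoin k
        {GWA.r k (Polynomial k) ![shiftDown k] ![a] Polynomial.X,
         GWA.x k (Polynomial k) ![shiftDown k] ![a] 0 ^ ℓ,
         GWA.y k (Polynomial k) ![shiftDown k] ![a] 0 ^ ℓ} ∧
    Nonempty ((AlgHom.equalizer (φ : GWA k (Polynomial k) 1 ![shiftDown k] ![a] →ₐ[k] _)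
        (AlgHom.id k _)) ≃ₐ[k]
      GWA k (Polynomial k) 1 ![shiftDown k ^ ℓ]
        ![∏ j ∈ Finset.range ℓ, a.comp (Polynomial.X + Polynomial.C (j : k))]) :=
  classical_gwa_fixed_ring_general k a μ ℓ hℓ hμ φ hx hy hz
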